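/- arXiv:2407.01316 — 5 statements merged into one kernel-verified Lean document; each statement's English description precedes it below -/
import Mathlib

section
/- For α ∈ (0,1) and a random variable μ(Z) with E[max(μ(Z),0)] < ∞, the infimum in inf_{η∈ℝ} { (1/α) E[(μ(Z) − η)_+] + η } is attained at η equal to the (1−α)-quantile of μ(Z). -/
/-!
Write `F` for the distribution function of `μ(Z)` and `q` for its lower `(1−α)`-quantile. By
right-continuity `F q ≥ 1 − α`, and `F t < 1 − α` for `t < q`, so `P(μ(Z) > q) ≤ α ≤ P(μ(Z) ≥ q)`.
Moving `η` above `q` lowers `E[(μ(Z) − η)_+]` by at most `(η − q) P(μ(Z) > q) ≤ (η − q) α`, and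
moving it below `q` raises it by at least `(q − η) P(μ(Z) ≥ q) ≥ (q − η) α`; in both cases the
objective `E[(μ(Z) − η)_+] / α + η` does not decrease.
-/

open MeasureTheory Filter Topology Set ProbabilityTheory

section SuperlevelSet

variable {f : ℝ → ℝ} {c l : ℝ}

theorem Filter.Tendsto.nonempty_setOf_le_apply (hf : Tendsto f atTop (𝓝 l)) (hc : c < l) :
    {t | c ≤ f t}.Nonempty :=
  let ⟨t, ht⟩ := (hf.eventually (eventually_gt_nhds hc)).exists
  ⟨t, ht.le⟩

theorem Filter.Tendsto.bddBelow_setOf_le_apply (hf : Tendsto f atBot (𝓝 l)) (hc : l < c) :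
    BddBelow {t | c ≤ f t} := by
  obtain ⟨b, hb⟩ := eventually_atBot.1 (hf.eventually (eventually_lt_nhds hc))
  refine ⟨b, fun t ht => ?_⟩
  by_contra! htb
  exact (hb t htb.le).not_ge ht

theorem Monotone.leftLim_sInf_setOf_le_apply_le (hf : Monotone f)
    (hbdd : BddBelow {t | c ≤ f t}) : Function.leftLim f (sInf {t | c ≤ f t}) ≤ c := by
  refine _root_.le_of_tendsto (hf.tendsto_leftLim _) (eventually_nhdsWithin_of_forall ?_)
  intro t ht
  by_contra! h
  exact (csInf_le hbdd h.le).not_gt ht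

theorem StieltjesFunction.le_apply_sInf_setOf_le_apply (f : StieltjesFunction ℝ)
    (hne : {t | c ≤ f t}.Nonempty) : c ≤ f (sInf {t | c ≤ f t}) := by
  have habove : ∀ t, sInf {t | c ≤ f t} < t → c ≤ f t := fun t ht =>
    let ⟨s, hs, hst⟩ := exists_lt_of_csInf_lt hne ht
    hs.trans (f.mono hst.le)
  exact ge_of_tendsto ((f.right_continuous _).mono Ioi_subset_Ici_self).tendsto
    (eventually_nhdsWithin_of_forall habove)

end SuperlevelSet

noncomputable def lowerQuantile (ν : Measure ℝ) (p : ℝ) : ℝ :=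
  sInf {t | p ≤ cdf ν t}

section Quantile

variable {ν : Measure ℝ} [IsProbabilityMeasure ν] {p : ℝ}

theorem measureReal_Ioi_lowerQuantile_le (hp1 : p < 1) :
    ν.real (Ioi (lowerQuantile ν p)) ≤ 1 - p := by
  have hq := (cdf ν).le_apply_sInf_setOf_le_apply
    ((tendsto_cdf_atTop ν).nonempty_setOf_le_apply hp1)
  rw [← compl_Iic, probReal_compl_eq_one_sub measurableSet_Iic, ← cdf_eq_real]
  exact sub_le_sub_left hq 1

theorem le_measureReal_Ici_lowerQuantile (hp0 : 0 < p) :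
    1 - p ≤ ν.real (Ici (lowerQuantile ν p)) := by
  have hq := (cdf ν).mono.leftLim_sInf_setOf_le_apply_le
    ((tendsto_cdf_atBot ν).bddBelow_setOf_le_apply hp0)
  have hIio := (cdf ν).measure_Iio (tendsto_cdf_atBot ν) (lowerQuantile ν p)
  rw [measure_cdf, sub_zero] at hIio
  rw [← compl_Iio, probReal_compl_eq_one_sub measurableSet_Iio, measureReal_def, hIio,
    ENNReal.toReal_ofReal']
  exact sub_le_sub_left (max_le hq hp0.le) 1

end Quantile

section PositivePart

variable {ν : Measure ℝ} [IsFiniteMeasure ν]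

theorem integrable_max_sub_const (h : Integrable (fun x => max x 0) ν) (η : ℝ) :
    Integrable (fun x => max (x - η) 0) ν := by
  refine (h.add (integrable_const |η|)).mono' (by fun_prop) (ae_of_all _ fun x => ?_)
  rw [Real.norm_of_nonneg (le_max_right _ _), Pi.add_apply]
  exact max_le (by linarith [le_max_left x 0, neg_abs_le η]) (by positivity)

theorem integral_max_sub_le_of_le {q η : ℝ} (hqη : q ≤ η)
    (hq : Integrable (fun x => max (x - q) 0) ν) (hη : Integrable (fun x => max (x - η) 0) ν) :
    ∫ x, max (x - q) 0 ∂ν ≤ ∫ x, max (x - η) 0 ∂ν + (η - q) * ν.real (Ioi q) := by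
  have hind := (integrable_const (μ := ν) (η - q)).indicator (measurableSet_Ioi (a := q))
  have hpointwise : ∀ x, max (x - q) 0 ≤ max (x - η) 0 + (Ioi q).indicator (fun _ => η - q) x := by
    intro x
    by_cases hx : q < x
    · rw [indicator_of_mem (mem_Ioi.2 hx)]
      exact max_le (by linarith [le_max_left (x - η) 0]) (by linarith [le_max_right (x - η) 0])
    · rw [indicator_of_notMem (mt mem_Ioi.1 hx), add_zero]
      exact max_le (by linarith [le_max_right (x - η) 0]) (le_max_right _ _)
  calc ∫ x, max (x - q) 0 ∂ν
      ≤ ∫ x, max (x - η) 0 + (Ioi q).indicator (fun _ => η - q) x ∂ν :=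
        integral_mono hq (hη.add hind) hpointwise
    _ = _ := by
        rw [integral_add hη hind, integral_indicator_const _ measurableSet_Ioi, smul_eq_mul,
          mul_comm]

theorem integral_max_sub_add_le {q η : ℝ}
    (hq : Integrable (fun x => max (x - q) 0) ν) (hη : Integrable (fun x => max (x - η) 0) ν) :
    ∫ x, max (x - q) 0 ∂ν + (q - η) * ν.real (Ici q) ≤ ∫ x, max (x - η) 0 ∂ν := by
  have hind := (integrable_const (μ := ν) (q - η)).indicator (measurableSet_Ici (a := q))
  have hpointwise : ∀ x, max (x - q) 0 + (Ici q).indicator (fun _ => q - η) x ≤ max (x - η) 0 := by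
    intro x
    by_cases hx : q ≤ x
    · rw [indicator_of_mem (mem_Ici.2 hx), max_eq_left (sub_nonneg.2 hx)]
      linarith [le_max_left (x - η) 0]
    · rw [indicator_of_notMem (mt mem_Ici.1 hx), add_zero, max_eq_right (by linarith)]
      exact le_max_right _ _
  calc ∫ x, max (x - q) 0 ∂ν + (q - η) * ν.real (Ici q)
      = ∫ x, max (x - q) 0 + (Ici q).indicator (fun _ => q - η) x ∂ν := by
        rw [integral_add hq hind, integral_indicator_const _ measurableSet_Ici, smul_eq_mul,
          mul_comm]
    _ ≤ _ := integral_mono (hq.add hind) hη hpointwise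

end PositivePart

noncomputable def cvarObjective (ν : Measure ℝ) (α η : ℝ) : ℝ :=
  1 / α * ∫ x, max (x - η) 0 ∂ν + η

theorem cvarObjective_lowerQuantile_le {ν : Measure ℝ} [IsProbabilityMeasure ν]
    (hint : Integrable (fun x => max x 0) ν) {α : ℝ} (hα0 : 0 < α) (hα1 : α < 1) (η : ℝ) :
    cvarObjective ν α (lowerQuantile ν (1 - α)) ≤ cvarObjective ν α η := by
  set q := lowerQuantile ν (1 - α)
  have hI := integrable_max_sub_const hint
  unfold cvarObjective
  rcases le_total q η with hqη | _
  · have htail : ν.real (Ioi q) ≤ α := by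
      simpa using measureReal_Ioi_lowerQuantile_le (ν := ν) (p := 1 - α) (by linarith)
    calc 1 / α * ∫ x, max (x - q) 0 ∂ν + q
        ≤ 1 / α * (∫ x, max (x - η) 0 ∂ν + (η - q) * ν.real (Ioi q)) + q := by
          gcongr; exact integral_max_sub_le_of_le hqη (hI q) (hI η)
      _ ≤ 1 / α * (∫ x, max (x - η) 0 ∂ν + (η - q) * α) + q := by gcongr
      _ = 1 / α * ∫ x, max (x - η) 0 ∂ν + η := by field_simp; ring
  · have htail : α ≤ ν.real (Ici q) := by
      simpa using le_measureReal_Ici_lowerQuantile (ν := ν) (p := 1 - α) (by linarith)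
    calc 1 / α * ∫ x, max (x - q) 0 ∂ν + q
        = 1 / α * (∫ x, max (x - q) 0 ∂ν + (q - η) * α) + η := by field_simp; ring
      _ ≤ 1 / α * (∫ x, max (x - q) 0 ∂ν + (q - η) * ν.real (Ici q)) + η := by gcongr
      _ ≤ 1 / α * ∫ x, max (x - η) 0 ∂ν + η := by
          gcongr; exact integral_max_sub_add_le (hI q) (hI η)

/-- The infimum in the dual CVaR formula is attained at the `(1−α)`-quantile of `μ(Z)`. -/
theorem cvar_dual_attained_at_quantile
    {Z : Type*} [MeasurableSpace Z] (P : Measure Z) [IsProbabilityMeasure P]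
    (μ : Z → ℝ) (hμ : Measurable μ)
    (hint : Integrable (fun z => max (μ z) 0) P)
    (α : ℝ) (hα : α ∈ Set.Ioo (0 : ℝ) 1) :
    (1 / α) * (∫ z, max (μ z - sInf {t : ℝ | ENNReal.ofReal (1 - α) ≤ P {z | μ z ≤ t}}) 0 ∂P)
        + sInf {t : ℝ | ENNReal.ofReal (1 - α) ≤ P {z | μ z ≤ t}}
      = ⨅ η : ℝ, ((1 / α) * ∫ z, max (μ z - η) 0 ∂P + η) := by
  set ν := P.map μ
  have : IsProbabilityMeasure ν := Measure.isProbabilityMeasure_map hμ.aemeasurable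
  have hlaw (η : ℝ) : ∫ z, max (μ z - η) 0 ∂P = ∫ x, max (x - η) 0 ∂ν :=
    (integral_map hμ.aemeasurable
      (by fun_prop : Measurable fun x : ℝ => max (x - η) 0).aestronglyMeasurable).symm
  have hquantile :
      sInf {t : ℝ | ENNReal.ofReal (1 - α) ≤ P {z | μ z ≤ t}} = lowerQuantile ν (1 - α) := by
    congr 1
    ext t
    rw [mem_ofPred_eq, mem_ofPred_eq, ← ENNReal.ofReal_le_ofReal_iff (cdf_nonneg ν t), ofReal_cdf,
      Measure.map_apply hμ measurableSet_Iic]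
    rfl
  have hintν : Integrable (fun x => max x 0) ν :=
    (integrable_map_measure (by fun_prop) hμ.aemeasurable).2 hint
  have hmin := cvarObjective_lowerQuantile_le hintν hα.1 hα.2
  simp only [hquantile, hlaw]
  exact (le_ciInf hmin).antisymm (ciInf_le ⟨_, forall_mem_range.2 hmin⟩ _)
end

section
/- Let h : Z → ℝ be a measurable function with h ≥ 0, let Z_1,...,Z_n be points in Z, and let P be a probability measure on Z. Then | inf_{η∈ℝ} { (1/(αn)) Σ_i (h(Z_i) − η)_+ + η } − inf_{η∈ℝ} { (1/α) E_P[(h(Z) − η)_+] + η } | ≤ (1/α) sup_{η ≥ 0} | (1/n) Σ_i (h(Z_i) − η)_+ − E_P[(h(Z) − η)_+] |. -/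
open MeasureTheory

/-- Helper: the difference of two infima is bounded by `S` when each value of one function
is nearly dominated by each value of the other, via a common witness. -/
lemma abs_ciInf_sub_ciInf_le {f g : ℝ → ℝ} {S : ℝ}
    (hf : BddBelow (Set.range f)) (hg : BddBelow (Set.range g))
    (key : ∀ η : ℝ, ∃ η' : ℝ, f η' ≤ g η + S ∧ g η' ≤ f η + S) :
    |(⨅ η, f η) - (⨅ η, g η)| ≤ S := by
  have h1 : (⨅ η, f η) - S ≤ ⨅ η, g η := by
    refine le_ciInf fun η => ?_
    obtain ⟨η', h1, _⟩ := key η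
    have := ciInf_le hf η'
    linarith
  have h2 : (⨅ η, g η) - S ≤ ⨅ η, f η := by
    refine le_ciInf fun η => ?_
    obtain ⟨η', _, h2⟩ := key η
    have := ciInf_le hg η'
    linarith
  rw [abs_sub_le_iff]
  constructor <;> linarith

/-- The difference between the empirical and population dual CVaR values is bounded by the
suprema of an empirical process indexed only by `η ≥ 0`, since `0` is a lower bound on `h`. -/
theorem cvar_empirical_process_bound
    {Z : Type*} [MeasurableSpace Z] (P : Measure Z) [IsProbabilityMeasure P]
    (h : Z → ℝ) (hmeas : Measurable h)
    (hnonneg : ∀ z, 0 ≤ h z)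
    (hint : Integrable (fun z => max (h z) 0) P)
    (α : ℝ) (hα : α ∈ Set.Ioo (0 : ℝ) 1)
    (n : ℕ) (hn : 0 < n) (Zs : Fin n → Z) :
    |(⨅ η : ℝ, ((1 / (α * n)) * ∑ i : Fin n, max (h (Zs i) - η) 0 + η))
      - (⨅ η : ℝ, ((1 / α) * ∫ z, max (h z - η) 0 ∂P + η))|
    ≤ (1 / α) * ⨆ η : Set.Ici (0 : ℝ),
        |(1 / (n : ℝ)) * ∑ i : Fin n, max (h (Zs i) - (η : ℝ)) 0
          - ∫ z, max (h z - (η : ℝ)) 0 ∂P| := by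
  obtain ⟨hα0, hα1⟩ := hα
  have hn' : (0:ℝ) < n := Nat.cast_pos.mpr hn
  have hαn : (0:ℝ) < α * n := mul_pos hα0 hn'
  have hmax : (fun z => max (h z) 0) = h := funext fun z => max_eq_left (hnonneg z)
  have hinth : Integrable h P := hmax ▸ hint
  -- integrability of the truncated functions
  have hintη : ∀ η : ℝ, Integrable (fun z => max (h z - η) 0) P := by
    intro η
    refine (hinth.add (integrable_const |η|)).mono
      (((hmeas.sub measurable_const).max measurable_const).aestronglyMeasurable)
      (Filter.Eventually.of_forall fun z => ?_)
    simp only [Pi.add_apply, Real.norm_eq_abs]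
    rw [abs_of_nonneg (le_max_right _ _)]
    have h1 : h z - η ≤ h z + |η| := by have := neg_abs_le η; linarith
    have h0 : (0:ℝ) ≤ h z + |η| := add_nonneg (hnonneg z) (abs_nonneg η)
    exact (max_le h1 h0).trans (le_abs_self _)
  set f : ℝ → ℝ := fun η => (1 / (α * n)) * ∑ i : Fin n, max (h (Zs i) - η) 0 + η with hfdef
  set g : ℝ → ℝ := fun η => (1 / α) * ∫ z, max (h z - η) 0 ∂P + η with hgdef
  set Q : Set.Ici (0:ℝ) → ℝ := fun η =>
      |(1 / (n : ℝ)) * ∑ i : Fin n, max (h (Zs i) - (η : ℝ)) 0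
        - ∫ z, max (h z - (η : ℝ)) 0 ∂P| with hQdef
  -- the sup is over a bounded family
  have hQbdd : BddAbove (Set.range Q) := by
    refine ⟨(1 / (n:ℝ)) * ∑ i : Fin n, h (Zs i) + ∫ z, h z ∂P, ?_⟩
    rintro x ⟨⟨η, hη⟩, rfl⟩
    simp only [hQdef]
    have hη' : (0:ℝ) ≤ η := hη
    have ha1 : ∑ i : Fin n, max (h (Zs i) - η) 0 ≤ ∑ i : Fin n, h (Zs i) :=
      Finset.sum_le_sum fun i _ => max_le (by linarith [hnonneg (Zs i)]) (hnonneg (Zs i))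
    have ha0 : (0:ℝ) ≤ ∑ i : Fin n, max (h (Zs i) - η) 0 :=
      Finset.sum_nonneg fun i _ => le_max_right _ _
    have hb1 : ∫ z, max (h z - η) 0 ∂P ≤ ∫ z, h z ∂P :=
      integral_mono (hintη η) hinth fun z => max_le (by linarith [hnonneg z]) (hnonneg z)
    have hb0 : (0:ℝ) ≤ ∫ z, max (h z - η) 0 ∂P :=
      integral_nonneg fun z => le_max_right _ _
    have hinv : (0:ℝ) ≤ 1 / (n:ℝ) := by positivity
    rw [abs_sub_le_iff]
    constructor
    · nlinarith
    · nlinarith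
  -- monotonicity of f for η ≤ 0
  have hsum0 : ∑ i : Fin n, max (h (Zs i) - 0) 0 = ∑ i : Fin n, h (Zs i) :=
    Finset.sum_congr rfl fun i _ => by rw [sub_zero, max_eq_left (hnonneg (Zs i))]
  have hint0 : ∫ z, max (h z - 0) 0 ∂P = ∫ z, h z ∂P := by
    simp only [sub_zero]
    rw [hmax]
  have hηα : ∀ η : ℝ, η ≤ 0 → η / α ≤ η := by
    intro η hη
    rw [div_le_iff₀ hα0]
    nlinarith
  have hfmono : ∀ η : ℝ, η ≤ 0 → f 0 ≤ f η := by
    intro η hη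
    have hsum : ∑ i : Fin n, max (h (Zs i) - η) 0 = (∑ i : Fin n, h (Zs i)) - n * η := by
      rw [Finset.sum_congr rfl fun i _ =>
        max_eq_left (by linarith [hnonneg (Zs i)] : (0:ℝ) ≤ h (Zs i) - η)]
      rw [Finset.sum_sub_distrib, Finset.sum_const, Finset.card_univ, Fintype.card_fin,
        nsmul_eq_mul]
    simp only [hfdef, hsum, hsum0]
    have hexp : 1 / (α * ↑n) * ((∑ i : Fin n, h (Zs i)) - ↑n * η) + η
        = 1 / (α * ↑n) * (∑ i : Fin n, h (Zs i)) + (η - η / α) := by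
      field_simp
      ring
    rw [hexp]
    have := hηα η hη
    linarith
  -- monotonicity of g for η ≤ 0
  have hIη : ∀ η : ℝ, η ≤ 0 → ∫ z, max (h z - η) 0 ∂P = (∫ z, h z ∂P) - η := by
    intro η hη
    have : ∫ z, max (h z - η) 0 ∂P = ∫ z, h z - η ∂P :=
      integral_congr_ae (Filter.Eventually.of_forall fun z =>
        max_eq_left (by linarith [hnonneg z]))
    rw [this, integral_sub hinth (integrable_const η), integral_const]
    simp
  have hgmono : ∀ η : ℝ, η ≤ 0 → g 0 ≤ g η := by
    intro η hη
    simp only [hgdef, hIη η hη, hint0]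
    have hexp : 1 / α * ((∫ z, h z ∂P) - η) + η
        = 1 / α * (∫ z, h z ∂P) + (η - η / α) := by
      field_simp
      ring
    rw [hexp]
    have := hηα η hη
    linarith
  -- nonnegativity, hence bounded below
  have hf0 : ∀ η : ℝ, 0 ≤ f η := by
    intro η
    rcases le_or_gt 0 η with hη | hη
    · have : (0:ℝ) ≤ 1 / (α * n) * ∑ i : Fin n, max (h (Zs i) - η) 0 := by
        have := Finset.sum_nonneg (fun i (_ : i ∈ Finset.univ) =>
          le_max_right (h (Zs i) - η) 0)
        positivity
      simp only [hfdef]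
      linarith
    · refine le_trans ?_ (hfmono η hη.le)
      have : (0:ℝ) ≤ 1 / (α * n) * ∑ i : Fin n, max (h (Zs i) - 0) 0 := by
        have := Finset.sum_nonneg (fun i (_ : i ∈ Finset.univ) =>
          le_max_right (h (Zs i) - 0) 0)
        positivity
      simp only [hfdef]
      linarith
  have hg0 : ∀ η : ℝ, 0 ≤ g η := by
    intro η
    rcases le_or_gt 0 η with hη | hη
    · have : (0:ℝ) ≤ 1 / α * ∫ z, max (h z - η) 0 ∂P := by
        have := integral_nonneg (μ := P) (f := fun z => max (h z - η) 0)
          (fun z => le_max_right _ _)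
        positivity
      simp only [hgdef]
      linarith
    · refine le_trans ?_ (hgmono η hη.le)
      have : (0:ℝ) ≤ 1 / α * ∫ z, max (h z - 0) 0 ∂P := by
        have := integral_nonneg (μ := P) (f := fun z => max (h z - 0) 0)
          (fun z => le_max_right _ _)
        positivity
      simp only [hgdef]
      linarith
  have hfbdd : BddBelow (Set.range f) := ⟨0, by rintro x ⟨η, rfl⟩; exact hf0 η⟩
  have hgbdd : BddBelow (Set.range g) := ⟨0, by rintro x ⟨η, rfl⟩; exact hg0 η⟩
  set S : ℝ := (1 / α) * ⨆ η : Set.Ici (0:ℝ), Q η with hSdef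
  -- the pointwise bound for η ≥ 0
  have hfg : ∀ η : ℝ, 0 ≤ η → |f η - g η| ≤ S := by
    intro η hη
    have hdiff : f η - g η = (1 / α) *
        ((1 / (n : ℝ)) * ∑ i : Fin n, max (h (Zs i) - η) 0
          - ∫ z, max (h z - η) 0 ∂P) := by
      simp only [hfdef, hgdef]
      field_simp
      ring
    rw [hdiff, abs_mul, abs_of_pos (by positivity : (0:ℝ) < 1 / α)]
    refine mul_le_mul_of_nonneg_left ?_ (by positivity)
    exact le_ciSup hQbdd (⟨η, hη⟩ : Set.Ici (0:ℝ))
  -- apply the helper lemma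
  refine abs_ciInf_sub_ciInf_le hfbdd hgbdd fun η => ?_
  refine ⟨max η 0, ?_, ?_⟩
  · have h1 := hfg (max η 0) (le_max_right _ _)
    have h2 : g (max η 0) ≤ g η := by
      rcases le_or_gt 0 η with hη | hη
      · rw [max_eq_left hη]
      · rw [max_eq_right hη.le]; exact hgmono η hη.le
    rw [abs_sub_le_iff] at h1
    simp only [hfdef, hgdef] at h1 h2 ⊢
    linarith [h1.1]
  · have h1 := hfg (max η 0) (le_max_right _ _)
    have h2 : f (max η 0) ≤ f η := by
      rcases le_or_gt 0 η with hη | hη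
      · rw [max_eq_left hη]
      · rw [max_eq_right hη.le]; exact hfmono η hη.le
    rw [abs_sub_le_iff] at h1
    simp only [hfdef, hgdef] at h1 h2 ⊢
    linarith [h1.2]
end

section
/- Let ψ : [0,∞) → [0,∞) be sub-root: nonnegative, nondecreasing, and r ↦ ψ(r)/√r nonincreasing on (0,∞). If ψ is not identically zero, then ψ is continuous on (0,∞) and has a unique positive fixed point r* > 0 with ψ(r*) = r*. -/
/-- A non-constant sub-root function (nonnegative, nondecreasing on `[0,∞)`, with
`ψ(r)/√r` nonincreasing on `(0,∞)`) is continuous on `(0,∞)` and has a unique positive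
fixed point. -/
theorem subroot_continuous_and_unique_fixed_point
    (ψ : ℝ → ℝ)
    (hnonneg : ∀ r, 0 ≤ r → 0 ≤ ψ r)
    (hmono : ∀ r s, 0 ≤ r → r ≤ s → ψ r ≤ ψ s)
    (hsubroot : ∀ r s, 0 < r → r ≤ s → ψ s / Real.sqrt s ≤ ψ r / Real.sqrt r)
    (hnonzero : ∃ r : ℝ, 0 < r ∧ ψ r ≠ 0) :
    ContinuousOn ψ (Set.Ioi (0 : ℝ)) ∧ ∃! r : ℝ, 0 < r ∧ ψ r = r := by
  have key : ∀ r s, 0 < r → r ≤ s → ψ s * Real.sqrt r ≤ ψ r * Real.sqrt s := by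
    intro r s hr hrs
    have hs : (0:ℝ) < s := lt_of_lt_of_le hr hrs
    have h := hsubroot r s hr hrs
    have hr' : 0 < Real.sqrt r := Real.sqrt_pos.mpr hr
    have hs' : 0 < Real.sqrt s := Real.sqrt_pos.mpr hs
    rw [div_le_div_iff₀ hs' hr'] at h
    linarith
  have hcont : ContinuousOn ψ (Set.Ioi (0:ℝ)) := by
    intro x hx
    have hx0 : (0:ℝ) < x := hx
    have hsx : 0 < Real.sqrt x := Real.sqrt_pos.mpr hx0
    have c1 : Continuous fun y : ℝ => ψ x * Real.sqrt (min x y) / Real.sqrt x := by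
      fun_prop
    have c2 : Continuous fun y : ℝ => ψ x * Real.sqrt (max x y) / Real.sqrt x := by
      fun_prop
    have hval : ψ x * Real.sqrt x / Real.sqrt x = ψ x := by
      field_simp
    have hl : Filter.Tendsto (fun y : ℝ => ψ x * Real.sqrt (min x y) / Real.sqrt x)
        (nhdsWithin x (Set.Ioi 0)) (nhds (ψ x)) := by
      have h : Filter.Tendsto (fun y : ℝ => ψ x * Real.sqrt (min x y) / Real.sqrt x)
          (nhds x) (nhds (ψ x)) := by
        simpa [min_self, hval] using c1.tendsto x
      exact h.mono_left nhdsWithin_le_nhds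
    have hu : Filter.Tendsto (fun y : ℝ => ψ x * Real.sqrt (max x y) / Real.sqrt x)
        (nhdsWithin x (Set.Ioi 0)) (nhds (ψ x)) := by
      have h : Filter.Tendsto (fun y : ℝ => ψ x * Real.sqrt (max x y) / Real.sqrt x)
          (nhds x) (nhds (ψ x)) := by
        simpa [max_self, hval] using c2.tendsto x
      exact h.mono_left nhdsWithin_le_nhds
    have hlb : ∀ᶠ y in nhdsWithin x (Set.Ioi 0),
        ψ x * Real.sqrt (min x y) / Real.sqrt x ≤ ψ y := by
      filter_upwards [self_mem_nhdsWithin] with y hy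
      have hy0 : (0:ℝ) < y := hy
      rcases le_total y x with hyx | hxy
      · rw [min_eq_right hyx, div_le_iff₀ hsx]
        exact key y x hy0 hyx
      · rw [min_eq_left hxy, hval]
        exact hmono x y (le_of_lt hx0) hxy
    have hub : ∀ᶠ y in nhdsWithin x (Set.Ioi 0),
        ψ y ≤ ψ x * Real.sqrt (max x y) / Real.sqrt x := by
      filter_upwards [self_mem_nhdsWithin] with y hy
      have hy0 : (0:ℝ) < y := hy
      rcases le_total y x with hyx | hxy
      · rw [max_eq_left hyx, hval]
        exact hmono y x (le_of_lt hy0) hyx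
      · rw [max_eq_right hxy, le_div_iff₀ hsx]
        exact key x y hx0 hxy
    exact tendsto_of_tendsto_of_tendsto_of_le_of_le' hl hu hlb hub
  refine ⟨hcont, ?_⟩
  obtain ⟨r₀, hr₀, hc⟩ := hnonzero
  have hc0 : 0 < ψ r₀ := lt_of_le_of_ne (hnonneg r₀ hr₀.le) (Ne.symm hc)
  have hsr₀ : 0 < Real.sqrt r₀ := Real.sqrt_pos.mpr hr₀
  set K : ℝ := ψ r₀ / Real.sqrt r₀ with hK
  have hK0 : 0 < K := div_pos hc0 hsr₀
  set a : ℝ := min r₀ (K ^ 2) with ha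
  set b : ℝ := max r₀ (K ^ 2) with hb
  have ha0 : 0 < a := lt_min hr₀ (pow_pos hK0 2)
  have hab : a ≤ b := le_trans (min_le_left _ _) (le_max_left _ _)
  have hsa : 0 < Real.sqrt a := Real.sqrt_pos.mpr ha0
  have hsb : 0 < Real.sqrt b := Real.sqrt_pos.mpr (lt_of_lt_of_le ha0 hab)
  -- ψ a ≥ a
  have hfa : a ≤ ψ a := by
    have h1 := key a r₀ ha0 (min_le_left _ _)
    -- ψ r₀ * √a ≤ ψ a * √r₀, so K * √a ≤ ψ a
    have h2 : K * Real.sqrt a ≤ ψ a := by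
      rw [hK, div_mul_eq_mul_div, div_le_iff₀ hsr₀]
      linarith
    have h3 : Real.sqrt a ≤ K := by
      have : Real.sqrt a ≤ Real.sqrt (K ^ 2) :=
        Real.sqrt_le_sqrt (min_le_right _ _)
      rwa [Real.sqrt_sq hK0.le] at this
    have h4 : a = Real.sqrt a * Real.sqrt a := (Real.mul_self_sqrt ha0.le).symm
    nlinarith
  -- ψ b ≤ b
  have hfb : ψ b ≤ b := by
    have h1 := key r₀ b hr₀ (le_max_left _ _)
    have h2 : ψ b ≤ K * Real.sqrt b := by
      rw [hK, div_mul_eq_mul_div, le_div_iff₀ hsr₀]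
      linarith
    have h3 : K ≤ Real.sqrt b := by
      have : Real.sqrt (K ^ 2) ≤ Real.sqrt b :=
        Real.sqrt_le_sqrt (le_max_right _ _)
      rwa [Real.sqrt_sq hK0.le] at this
    have h4 : b = Real.sqrt b * Real.sqrt b :=
      (Real.mul_self_sqrt (lt_of_lt_of_le ha0 hab).le).symm
    nlinarith
  -- IVT for ψ r - r
  have hsub : Set.Icc a b ⊆ Set.Ioi (0:ℝ) := fun z hz => lt_of_lt_of_le ha0 hz.1
  have hfcont : ContinuousOn (fun r => ψ r - r) (Set.Icc a b) :=
    (hcont.mono hsub).sub continuousOn_id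
  have hmem : (0:ℝ) ∈ Set.Icc (ψ b - b) (ψ a - a) := ⟨by linarith, by linarith⟩
  obtain ⟨r, hrmem, hr⟩ := intermediate_value_Icc' hab hfcont hmem
  have hrpos : 0 < r := lt_of_lt_of_le ha0 hrmem.1
  have hr' : ψ r - r = 0 := hr
  have hrfix : ψ r = r := by linarith
  refine ⟨r, ⟨hrpos, hrfix⟩, ?_⟩
  intro s ⟨hs, hsfix⟩
  have hss : 0 < Real.sqrt s := Real.sqrt_pos.mpr hs
  have hsr : 0 < Real.sqrt r := Real.sqrt_pos.mpr hrpos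
  have hs2 : s = Real.sqrt s * Real.sqrt s := (Real.mul_self_sqrt hs.le).symm
  have hr2 : r = Real.sqrt r * Real.sqrt r := (Real.mul_self_sqrt hrpos.le).symm
  rcases le_total s r with h | h
  · have := key s r hs h
    rw [hsfix, hrfix] at this
    -- r * √s ≤ s * √r
    have h5 : Real.sqrt r ≤ Real.sqrt s := by nlinarith [mul_pos hsr hss]
    have : r ≤ s := by nlinarith [hsr.le, hss.le]
    linarith
  · have := key r s hrpos h
    rw [hsfix, hrfix] at this
    have h5 : Real.sqrt s ≤ Real.sqrt r := by nlinarith [mul_pos hsr hss]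
    have : s ≤ r := by nlinarith [hsr.le, hss.le]
    linarith
end

section
/- Let L ∈ L^{k*}(P) be a random variable, k* ∈ (1,∞]. Then the quantile function of L satisfies F_L^{-1}(1−t) = ∫_{(t,1]} α^{-1} dλ_L(α) for all t ∈ (0,1), where λ_L is a probability distribution on (0,1], if and only if: L ≥ 0 P-a.s., E_P[L] = 1, λ_L(α) = E_P[(L − F_L^{-1}(1−α))_+] for α ∈ (0,1), and λ_L(1) = 1 (where λ_L(α) denotes the CDF value of λ_L at α). -/
/-!
Write `c t = F_L⁻¹(1 - t)`. The map `c` pushes the uniform law on `(0,1)` forward to the law of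
`L`, so every expectation of a function of `L` is an integral of `c` over `(0,1)`.

If `c t = ∫_{(t,1]} a⁻¹ dλ(a)`, Tonelli gives `∫_0^1 (c t - c α)_+ dt = λ (0,α]` for `α ≤ 1`,
which yields all the conditions (`α = 1` is the mean). Conversely, these conditions determine the
tail `λ (s,1] = ∫_s^1 c + s c(s)`; writing `a⁻¹ = 1 + ∫_a^1 s⁻² ds` and applying Tonelli twice
recovers `c t = ∫_{(t,1]} a⁻¹ dλ(a)`. All integrals are kept in `ℝ≥0∞`, so no integrability
bookkeeping is needed until the final translation to real expectations.
-/

open MeasureTheory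
open scoped ENNReal

open Set Filter ProbabilityTheory

noncomputable def quantile (μ : Measure ℝ) (p : ℝ) : ℝ :=
  sInf {s | ENNReal.ofReal p ≤ μ (Iic s)}

theorem volume_Ioo_inter_Ici {x : ℝ} (hx : 0 ≤ x) :
    volume (Ioo 0 1 ∩ Ici x) = ENNReal.ofReal (1 - x) := by
  rw [← measure_congr ((EventuallyEq.refl _ _).inter Ioi_ae_eq_Ici), Ioo_inter_Ioi,
    max_eq_right hx, Real.volume_Ioo]

section Quantile

variable (μ : Measure ℝ) [IsProbabilityMeasure μ]

theorem quantile_eq_sInf_cdf (p : ℝ) : quantile μ p = sInf {s | p ≤ cdf μ s} := by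
  simp only [quantile, ← ofReal_cdf, ENNReal.ofReal_le_ofReal_iff (cdf_nonneg μ _)]

theorem quantile_le_iff {p : ℝ} (hp : p ∈ Ioo (0 : ℝ) 1) {s : ℝ} :
    quantile μ p ≤ s ↔ p ≤ cdf μ s := by
  rw [quantile_eq_sInf_cdf]
  have hbdd : BddBelow {s | p ≤ cdf μ s} := by
    obtain ⟨s₀, hs₀⟩ := ((tendsto_cdf_atBot μ).eventually_lt_const hp.1).exists
    exact ⟨s₀, fun s hs => le_of_not_gt fun hlt => (hs.trans (monotone_cdf μ hlt.le)).not_gt hs₀⟩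
  refine ⟨fun h => (monotone_cdf μ h).trans' ?_, csInf_le hbdd⟩
  have hne : {s | p ≤ cdf μ s}.Nonempty := ((tendsto_cdf_atTop μ).eventually_const_le hp.2).exists
  refine ge_of_tendsto (((cdf μ).right_continuous _).tendsto.mono_left
    (nhdsWithin_mono _ Ioi_subset_Ici_self)) ?_
  filter_upwards [self_mem_nhdsWithin] with y hy
  obtain ⟨s, hs, hsy⟩ := (csInf_lt_iff hbdd hne).1 hy
  exact hs.trans (monotone_cdf μ hsy.le)

theorem le_cdf_quantile {p : ℝ} (hp : p ∈ Ioo (0 : ℝ) 1) : p ≤ cdf μ (quantile μ p) :=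
  (quantile_le_iff μ hp).1 le_rfl

theorem monotoneOn_quantile : MonotoneOn (quantile μ) (Ioo 0 1) := fun _ hp _ hp' hpp' =>
  (quantile_le_iff μ hp).2 (hpp'.trans (le_cdf_quantile μ hp'))

theorem antitoneOn_quantile_one_sub : AntitoneOn (fun t => quantile μ (1 - t)) (Ioo 0 1) :=
  fun _ ht _ ht' htt' => monotoneOn_quantile μ ⟨by linarith [ht'.2], by linarith [ht'.1]⟩
    ⟨by linarith [ht.2], by linarith [ht.1]⟩ (by linarith)

theorem quantile_nonneg (h : μ (Iio 0) = 0) {p : ℝ} (hp : p ∈ Ioo (0 : ℝ) 1) :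
    0 ≤ quantile μ p := by
  by_contra! hneg
  have : cdf μ (quantile μ p) ≤ 0 := by
    rw [cdf_eq_real]
    calc μ.real (Iic (quantile μ p)) ≤ μ.real (Iio 0) := measureReal_mono (Iic_subset_Iio.2 hneg)
      _ = 0 := by rw [measureReal_def, h, ENNReal.toReal_zero]
  exact hp.1.not_ge ((le_cdf_quantile μ hp).trans this)

theorem map_quantile_one_sub :
    (volume.restrict (Ioo 0 1)).map (fun t => quantile μ (1 - t)) = μ := by
  have hm := aemeasurable_restrict_of_antitoneOn (μ := volume) measurableSet_Ioo
    (antitoneOn_quantile_one_sub μ)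
  refine Measure.ext_of_Iic _ _ fun s => ?_
  rw [Measure.map_apply_of_aemeasurable hm measurableSet_Iic,
    Measure.restrict_apply' measurableSet_Ioo, inter_comm]
  have hset : Ioo 0 1 ∩ (fun t => quantile μ (1 - t)) ⁻¹' Iic s = Ioo 0 1 ∩ Ici (1 - cdf μ s) := by
    ext t
    simp only [mem_inter_iff, mem_preimage, mem_Iic, mem_Ici, and_congr_right_iff]
    intro ht
    rw [quantile_le_iff μ ⟨by linarith [ht.2], by linarith [ht.1]⟩]
    constructor <;> intro h <;> linarith
  rw [hset, volume_Ioo_inter_Ici (by linarith [cdf_le_one μ s]), sub_sub_cancel, ofReal_cdf]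

end Quantile

theorem lintegral_mul_setLIntegral_comm {α β : Type*} [MeasurableSpace α] [MeasurableSpace β]
    {κ : Measure α} {ν : Measure β} [SFinite κ] [SFinite ν] {S : Set (α × β)}
    (hS : MeasurableSet S) {f : β → ℝ≥0∞} {g : α → ℝ≥0∞} (hf : AEMeasurable f ν)
    (hg : AEMeasurable g κ) :
    ∫⁻ x, g x * ∫⁻ y in Prod.mk x ⁻¹' S, f y ∂ν ∂κ
      = ∫⁻ y, f y * ∫⁻ x in (·, y) ⁻¹' S, g x ∂κ ∂ν := by
  have hF : AEMeasurable (S.indicator fun z => g z.1 * f z.2) (κ.prod ν) :=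
    (hg.comp_fst.mul hf.comp_snd).indicator hS
  calc ∫⁻ x, g x * ∫⁻ y in Prod.mk x ⁻¹' S, f y ∂ν ∂κ
      = ∫⁻ x, ∫⁻ y, S.indicator (fun z => g z.1 * f z.2) (x, y) ∂ν ∂κ := by
        refine lintegral_congr fun x => ?_
        rw [← lintegral_const_mul'' _ hf.restrict,
          ← lintegral_indicator (hS.preimage measurable_prodMk_left)]
        rfl
    _ = ∫⁻ y, ∫⁻ x, S.indicator (fun z => g z.1 * f z.2) (x, y) ∂κ ∂ν :=
        lintegral_lintegral_swap hF
    _ = ∫⁻ y, f y * ∫⁻ x in (·, y) ⁻¹' S, g x ∂κ ∂ν := by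
        refine lintegral_congr fun y => ?_
        rw [← lintegral_const_mul'' _ hg.restrict,
          ← lintegral_indicator (hS.preimage measurable_prodMk_right)]
        simp only [indicator, mem_preimage, mul_comm]
        rfl

theorem lintegral_mul_setLIntegral_Ioi_comm {κ ν : Measure ℝ} [SFinite κ] [SFinite ν]
    {f g : ℝ → ℝ≥0∞} (hf : AEMeasurable f ν) (hg : AEMeasurable g κ) :
    ∫⁻ x, g x * ∫⁻ y in Ioi x, f y ∂ν ∂κ = ∫⁻ y, f y * ∫⁻ x in Iio y, g x ∂κ ∂ν :=
  lintegral_mul_setLIntegral_comm (measurableSet_lt measurable_fst measurable_snd) hf hg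

theorem lintegral_mul_setLIntegral_Ici_comm {κ ν : Measure ℝ} [SFinite κ] [SFinite ν]
    {f g : ℝ → ℝ≥0∞} (hf : AEMeasurable f ν) (hg : AEMeasurable g κ) :
    ∫⁻ x, g x * ∫⁻ y in Ici x, f y ∂ν ∂κ = ∫⁻ y, f y * ∫⁻ x in Iic y, g x ∂κ ∂ν :=
  lintegral_mul_setLIntegral_comm (measurableSet_le measurable_fst measurable_snd) hf hg

theorem setLIntegral_inv_sq {a b : ℝ} (ha : 0 < a) (hab : a ≤ b) :
    ∫⁻ s in Ioo a b, ENNReal.ofReal (s ^ 2)⁻¹ = ENNReal.ofReal (a⁻¹ - b⁻¹) := by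
  have hpos : ∀ x ∈ Icc a b, 0 < x := fun x hx => ha.trans_le hx.1
  have hint : IntegrableOn (fun s : ℝ => (s ^ 2)⁻¹) (Icc a b) :=
    (continuousOn_pow 2).inv₀ (fun x hx => (pow_pos (hpos x hx) 2).ne') |>.integrableOn_Icc
  have hderiv : ∀ x ∈ uIcc a b, HasDerivAt (fun y : ℝ => -y⁻¹) (x ^ 2)⁻¹ x := by
    intro x hx
    rw [uIcc_of_le hab] at hx
    have h := (hasDerivAt_inv (hpos x hx).ne').neg
    rwa [neg_neg] at h
  rw [← ofReal_integral_eq_lintegral_ofReal (hint.mono_set Ioo_subset_Icc_self)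
    ((ae_restrict_iff' measurableSet_Ioo).2 (ae_of_all _ fun s _ => by positivity)),
    ← integral_Ioc_eq_integral_Ioo, ← intervalIntegral.integral_of_le hab,
    intervalIntegral.integral_eq_sub_of_hasDerivAt hderiv
      ((intervalIntegrable_iff_integrableOn_Icc_of_le hab).2 hint), neg_sub_neg]

theorem lintegral_setLIntegral_Ioc_inv (lam : Measure ℝ) [SFinite lam] {α b : ℝ} (hαb : α ≤ b) :
    ∫⁻ t in Ioo 0 b, ∫⁻ a in Ioc t α, ENNReal.ofReal a⁻¹ ∂lam = lam (Ioc 0 α) := by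
  have key := lintegral_mul_setLIntegral_Ioi_comm (κ := volume.restrict (Ioo 0 b))
    (ν := lam.restrict (Ioc 0 α)) (f := fun a => ENNReal.ofReal a⁻¹) (g := 1) (by fun_prop)
    aemeasurable_const
  simp only [Pi.one_apply, one_mul, lintegral_one, Measure.restrict_apply_univ,
    Measure.restrict_apply' measurableSet_Ioo, Measure.restrict_restrict' measurableSet_Ioc] at key
  calc ∫⁻ t in Ioo 0 b, ∫⁻ a in Ioc t α, ENNReal.ofReal a⁻¹ ∂lam
      = ∫⁻ t in Ioo 0 b, ∫⁻ a in Ioi t ∩ Ioc 0 α, ENNReal.ofReal a⁻¹ ∂lam := by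
        refine setLIntegral_congr_fun measurableSet_Ioo fun t ht => ?_
        rw [inter_comm, Ioc_inter_Ioi, max_eq_right ht.1.le]
    _ = ∫⁻ a in Ioc 0 α, ENNReal.ofReal a⁻¹ * volume (Iio a ∩ Ioo 0 b) ∂lam := key
    _ = ∫⁻ a in Ioc 0 α, 1 ∂lam := by
        refine setLIntegral_congr_fun measurableSet_Ioc fun a ha => ?_
        rw [Iio_inter_Ioo, min_eq_left (ha.2.trans hαb), Real.volume_Ioo, sub_zero,
          ← ENNReal.ofReal_mul (inv_nonneg.2 ha.1.le), inv_mul_cancel₀ ha.1.ne', ENNReal.ofReal_one]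
    _ = lam (Ioc 0 α) := setLIntegral_one _

theorem setLIntegral_Ioc_inv_eq_add (lam : Measure ℝ) [SFinite lam] {t : ℝ} (ht : 0 < t) :
    ∫⁻ a in Ioc t 1, ENNReal.ofReal a⁻¹ ∂lam
      = lam (Ioc t 1) + ∫⁻ s in Ioo t 1, ENNReal.ofReal (s ^ 2)⁻¹ * lam (Ioc t s) := by
  have key := lintegral_mul_setLIntegral_Ici_comm (κ := lam.restrict (Ioc t 1))
    (ν := volume.restrict (Ioo t 1)) (f := fun s => ENNReal.ofReal (s ^ 2)⁻¹) (g := 1)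
    (by fun_prop) aemeasurable_const
  simp only [Pi.one_apply, one_mul, lintegral_one, Measure.restrict_apply_univ,
    Measure.restrict_apply' measurableSet_Ioc, Measure.restrict_restrict' measurableSet_Ioo] at key
  calc ∫⁻ a in Ioc t 1, ENNReal.ofReal a⁻¹ ∂lam
      = ∫⁻ a in Ioc t 1, (1 + ∫⁻ s in Ici a ∩ Ioo t 1, ENNReal.ofReal (s ^ 2)⁻¹) ∂lam := by
        refine setLIntegral_congr_fun measurableSet_Ioc fun a ha => ?_
        have ha0 : 0 < a := ht.trans ha.1
        have h1a : 1 ≤ a⁻¹ := one_le_inv₀ ha0 |>.2 ha.2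
        rw [show Ici a ∩ Ioo t 1 = Ico a 1 by grind, ← setLIntegral_congr Ioo_ae_eq_Ico,
          setLIntegral_inv_sq ha0 ha.2, inv_one, ← ENNReal.ofReal_one,
          ← ENNReal.ofReal_add zero_le_one (by linarith), add_sub_cancel]
    _ = lam (Ioc t 1) + ∫⁻ s in Ioo t 1, ENNReal.ofReal (s ^ 2)⁻¹ * lam (Iic s ∩ Ioc t 1) := by
        rw [lintegral_add_left measurable_const, setLIntegral_one, key]
    _ = lam (Ioc t 1) + ∫⁻ s in Ioo t 1, ENNReal.ofReal (s ^ 2)⁻¹ * lam (Ioc t s) := by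
        congr 1
        refine setLIntegral_congr_fun measurableSet_Ioo fun s hs => ?_
        rw [Iic_inter_Ioc_of_le hs.2.le]

theorem setLIntegral_inv_sq_mul_tail {c : ℝ → ℝ≥0∞} {t : ℝ} (ht : 0 < t)
    (hc : AEMeasurable c (volume.restrict (Ioo t 1))) :
    ∫⁻ s in Ioo t 1, ENNReal.ofReal (s ^ 2)⁻¹ * ((∫⁻ u in Ioo s 1, c u) + ENNReal.ofReal s * c s)
      = ENNReal.ofReal t⁻¹ * ∫⁻ u in Ioo t 1, c u := by
  have key := lintegral_mul_setLIntegral_Ioi_comm (κ := volume.restrict (Ioo t 1))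
    (ν := volume.restrict (Ioo t 1)) (f := c) (g := fun s => ENNReal.ofReal (s ^ 2)⁻¹) hc
    (by fun_prop)
  simp only [Measure.restrict_restrict' measurableSet_Ioo] at key
  calc ∫⁻ s in Ioo t 1, ENNReal.ofReal (s ^ 2)⁻¹ * ((∫⁻ u in Ioo s 1, c u) + ENNReal.ofReal s * c s)
      = (∫⁻ s in Ioo t 1, ENNReal.ofReal (s ^ 2)⁻¹ * ∫⁻ u in Ioi s ∩ Ioo t 1, c u)
        + ∫⁻ s in Ioo t 1, ENNReal.ofReal s⁻¹ * c s := by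
        rw [← lintegral_add_right' _ (by fun_prop :
          AEMeasurable (fun s : ℝ => ENNReal.ofReal s⁻¹ * c s) (volume.restrict (Ioo t 1)))]
        refine setLIntegral_congr_fun measurableSet_Ioo fun s hs => ?_
        have hs0 : 0 < s := ht.trans hs.1
        rw [show Ioi s ∩ Ioo t 1 = Ioo s 1 by grind, mul_add, ← mul_assoc,
          ← ENNReal.ofReal_mul (by positivity)]
        field_simp
    _ = ∫⁻ u in Ioo t 1, (c u * ENNReal.ofReal (t⁻¹ - u⁻¹) + ENNReal.ofReal u⁻¹ * c u) := by
        rw [key, lintegral_add_left' ?_]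
        · congr 1
          refine setLIntegral_congr_fun measurableSet_Ioo fun u hu => ?_
          rw [Iio_inter_Ioo, min_eq_left hu.2.le, setLIntegral_inv_sq ht hu.1.le]
        · fun_prop
    _ = ∫⁻ u in Ioo t 1, ENNReal.ofReal t⁻¹ * c u := by
        refine setLIntegral_congr_fun measurableSet_Ioo fun u hu => ?_
        have hut : u⁻¹ ≤ t⁻¹ := inv_anti₀ ht hu.1.le
        rw [mul_comm (ENNReal.ofReal u⁻¹), ← mul_add, ← ENNReal.ofReal_add (by linarith)
          (inv_nonneg.2 (ht.trans hu.1).le), sub_add_cancel, mul_comm]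
    _ = ENNReal.ofReal t⁻¹ * ∫⁻ u in Ioo t 1, c u := lintegral_const_mul'' _ hc

section InverseIntegral

variable (lam : Measure ℝ)

theorem setIntegral_Ioc_inv_eq_toReal {t : ℝ} (ht : 0 ≤ t) :
    ∫ a in Ioc t 1, a⁻¹ ∂lam = (∫⁻ a in Ioc t 1, ENNReal.ofReal a⁻¹ ∂lam).toReal :=
  integral_eq_lintegral_of_nonneg_ae
    ((ae_restrict_iff' measurableSet_Ioc).2
      (ae_of_all _ fun _ ha => inv_nonneg.2 (ht.trans ha.1.le)))
    measurable_inv.aestronglyMeasurable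

variable [IsFiniteMeasure lam]

theorem setLIntegral_Ioc_inv_ne_top {t : ℝ} (ht : 0 < t) :
    ∫⁻ a in Ioc t 1, ENNReal.ofReal a⁻¹ ∂lam ≠ ⊤ := by
  have hle : ∫⁻ a in Ioc t 1, ENNReal.ofReal a⁻¹ ∂lam ≤ ENNReal.ofReal t⁻¹ * lam (Ioc t 1) := by
    rw [← setLIntegral_const]
    exact setLIntegral_mono' measurableSet_Ioc fun a ha =>
      ENNReal.ofReal_le_ofReal (inv_anti₀ ht ha.1.le)
  exact ne_top_of_le_ne_top (ENNReal.mul_ne_top ENNReal.ofReal_ne_top (measure_ne_top _ _)) hle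

theorem setLIntegral_Ioc_inv_sub {α : ℝ} (hα : α ∈ Ioc (0 : ℝ) 1) (t : ℝ) :
    (∫⁻ a in Ioc t 1, ENNReal.ofReal a⁻¹ ∂lam) - ∫⁻ a in Ioc α 1, ENNReal.ofReal a⁻¹ ∂lam
      = ∫⁻ a in Ioc t α, ENNReal.ofReal a⁻¹ ∂lam := by
  rcases le_or_gt t α with htα | hαt
  · rw [← Ioc_union_Ioc_eq_Ioc htα hα.2,
      lintegral_union measurableSet_Ioc (Ioc_disjoint_Ioc_of_le le_rfl),
      ENNReal.add_sub_cancel_right (setLIntegral_Ioc_inv_ne_top lam hα.1)]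
  · rw [Ioc_eq_empty_of_le hαt.le, Measure.restrict_empty, lintegral_zero_measure,
      tsub_eq_zero_of_le (lintegral_mono_set (Ioc_subset_Ioc_left hαt.le))]

theorem setLIntegral_Ioc_inv_eq_of_measure_Ioc {c : ℝ → ℝ≥0∞} {t : ℝ} (ht : t ∈ Ioo (0 : ℝ) 1)
    (hc : AEMeasurable c (volume.restrict (Ioo t 1)))
    (hlam : ∀ s ∈ Ico t 1, lam (Ioc s 1) = (∫⁻ u in Ioo s 1, c u) + ENNReal.ofReal s * c s) :
    ∫⁻ a in Ioc t 1, ENNReal.ofReal a⁻¹ ∂lam = c t := by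
  set M : ℝ → ℝ≥0∞ := fun s => (∫⁻ u in Ioo s 1, c u) + ENNReal.ofReal s * c s
  set I := ∫⁻ u in Ioo t 1, c u
  have hMt : lam (Ioc t 1) = M t := hlam t ⟨le_rfl, ht.2⟩
  have hI : ENNReal.ofReal t⁻¹ * I ≠ ⊤ := ENNReal.mul_ne_top ENNReal.ofReal_ne_top
    (ne_top_of_le_ne_top (measure_ne_top lam (Ioc t 1)) (hMt ▸ le_self_add))
  have hsplit : ∀ s ∈ Ioo t 1, lam (Ioc t s) + M s = M t := fun s hs => by
    rw [← hMt, show M s = lam (Ioc s 1) from (hlam s ⟨hs.1.le, hs.2⟩).symm,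
      ← measure_union (Ioc_disjoint_Ioc_of_le le_rfl) measurableSet_Ioc,
      Ioc_union_Ioc_eq_Ioc hs.1.le hs.2.le]
  have hmeas : Measurable fun s => ENNReal.ofReal (s ^ 2)⁻¹ * lam (Ioc t s) :=
    (by fun_prop : Measurable fun s : ℝ => ENNReal.ofReal (s ^ 2)⁻¹).mul
      (Monotone.measurable fun _ _ h => measure_mono (Ioc_subset_Ioc_right h))
  have hX : ∫⁻ s in Ioo t 1, ENNReal.ofReal (s ^ 2)⁻¹ * M s = ENNReal.ofReal t⁻¹ * I :=
    setLIntegral_inv_sq_mul_tail ht.1 hc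
  -- both sides plus `t⁻¹ ∫_t^1 c` equal `t⁻¹ · lam (t,1]`
  refine (ENNReal.add_left_inj hI).1 ?_
  calc (∫⁻ a in Ioc t 1, ENNReal.ofReal a⁻¹ ∂lam) + ENNReal.ofReal t⁻¹ * I
      = M t + ((∫⁻ s in Ioo t 1, ENNReal.ofReal (s ^ 2)⁻¹ * lam (Ioc t s))
          + ∫⁻ s in Ioo t 1, ENNReal.ofReal (s ^ 2)⁻¹ * M s) := by
        rw [setLIntegral_Ioc_inv_eq_add lam ht.1, hMt, hX, add_assoc]
    _ = M t + ∫⁻ s in Ioo t 1, ENNReal.ofReal (s ^ 2)⁻¹ * M t := by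
        rw [← lintegral_add_left hmeas]
        congr 1
        refine setLIntegral_congr_fun measurableSet_Ioo fun s hs => ?_
        rw [← mul_add, hsplit s hs]
    _ = ENNReal.ofReal t⁻¹ * M t := by
        have h1t : 1 ≤ t⁻¹ := (one_le_inv₀ ht.1).2 ht.2.le
        rw [lintegral_mul_const _ (by fun_prop), setLIntegral_inv_sq ht.1 ht.2.le, inv_one,
          ← one_add_mul, ← ENNReal.ofReal_one, ← ENNReal.ofReal_add zero_le_one (by linarith),
          add_sub_cancel]
    _ = c t + ENNReal.ofReal t⁻¹ * I := by
        rw [mul_add, ← mul_assoc, ← ENNReal.ofReal_mul (inv_nonneg.2 ht.1.le),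
          inv_mul_cancel₀ ht.1.ne', ENNReal.ofReal_one, one_mul, add_comm]

end InverseIntegral

theorem ofReal_eq_ofReal_sub_add_ofReal_min (x : ℝ) {a : ℝ} (ha : 0 ≤ a) :
    ENNReal.ofReal x = ENNReal.ofReal (x - a) + ENNReal.ofReal (min x a) := by
  rcases le_total x a with hxa | hax
  · rw [ENNReal.ofReal_of_nonpos (sub_nonpos.2 hxa), zero_add, min_eq_left hxa]
  · rw [min_eq_right hax, ← ENNReal.ofReal_add (by linarith) ha, sub_add_cancel]

theorem setLIntegral_ofReal_eq_add_of_antitoneOn {c : ℝ → ℝ} (hc : AntitoneOn c (Ioo 0 1))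
    {s : ℝ} (hs : s ∈ Ioo (0 : ℝ) 1) (hcs : 0 ≤ c s) :
    ∫⁻ u in Ioo 0 1, ENNReal.ofReal (c u) = (∫⁻ u in Ioo 0 1, ENNReal.ofReal (c u - c s))
      + ((∫⁻ u in Ioo s 1, ENNReal.ofReal (c u)) + ENNReal.ofReal s * ENNReal.ofReal (c s)) := by
  have hcm : AEMeasurable c (volume.restrict (Ioo 0 1)) :=
    aemeasurable_restrict_of_antitoneOn measurableSet_Ioo hc
  have hmin : ∫⁻ u in Ioo 0 1, ENNReal.ofReal (min (c u) (c s))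
      = (∫⁻ u in Ioo s 1, ENNReal.ofReal (c u)) + ENNReal.ofReal s * ENNReal.ofReal (c s) := by
    rw [← Ioc_union_Ioo_eq_Ioo hs.1.le hs.2,
      lintegral_union measurableSet_Ioo (disjoint_left.2 fun u hu hu' => hu'.1.not_ge hu.2),
      add_comm]
    congr 1
    · refine setLIntegral_congr_fun measurableSet_Ioo fun u hu => ?_
      rw [min_eq_left (hc hs ⟨hs.1.trans hu.1, hu.2⟩ hu.1.le)]
    · rw [setLIntegral_congr_fun measurableSet_Ioc fun u hu => by
          rw [min_eq_right (hc ⟨hu.1, hu.2.trans_lt hs.2⟩ hs hu.2)],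
        setLIntegral_const, Real.volume_Ioc, sub_zero, mul_comm]
  calc ∫⁻ u in Ioo 0 1, ENNReal.ofReal (c u)
      = ∫⁻ u in Ioo 0 1, (ENNReal.ofReal (c u - c s) + ENNReal.ofReal (min (c u) (c s))) :=
        lintegral_congr fun u => ofReal_eq_ofReal_sub_add_ofReal_min (c u) hcs
    _ = _ := by rw [lintegral_add_left' (hcm.sub_const _).ennreal_ofReal, hmin]

theorem eq_setIntegral_Ioc_inv_iff {c : ℝ → ℝ} (hc : AntitoneOn c (Ioo 0 1)) {lam : Measure ℝ}
    (hsupp : lam (Ioc 0 1)ᶜ = 0) :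
    (IsProbabilityMeasure lam ∧ ∀ t ∈ Ioo (0 : ℝ) 1, c t = ∫ a in Ioc t 1, a⁻¹ ∂lam) ↔
      ((∀ t ∈ Ioo (0 : ℝ) 1, 0 ≤ c t) ∧ ∫⁻ t in Ioo 0 1, ENNReal.ofReal (c t) = 1 ∧
        (∀ α ∈ Ioo (0 : ℝ) 1, lam (Ioc 0 α) = ∫⁻ t in Ioo 0 1, ENNReal.ofReal (c t - c α)) ∧
        lam (Ioc 0 1) = 1) := by
  constructor
  · rintro ⟨hprob, hrep⟩
    have hR : ∀ t ∈ Ioo (0 : ℝ) 1,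
        ENNReal.ofReal (c t) = ∫⁻ a in Ioc t 1, ENNReal.ofReal a⁻¹ ∂lam := fun t ht => by
      rw [hrep t ht, setIntegral_Ioc_inv_eq_toReal lam ht.1.le,
        ENNReal.ofReal_toReal (setLIntegral_Ioc_inv_ne_top lam ht.1)]
    have hnn : ∀ t ∈ Ioo (0 : ℝ) 1, 0 ≤ c t := fun t ht => by
      rw [hrep t ht, setIntegral_Ioc_inv_eq_toReal lam ht.1.le]
      exact ENNReal.toReal_nonneg
    have hlam1 : lam (Ioc 0 1) = 1 := (prob_compl_eq_zero_iff measurableSet_Ioc).1 hsupp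
    refine ⟨hnn, ?_, fun α hα => ?_, hlam1⟩
    · rw [setLIntegral_congr_fun measurableSet_Ioo hR, lintegral_setLIntegral_Ioc_inv lam le_rfl,
        hlam1]
    · rw [← lintegral_setLIntegral_Ioc_inv lam hα.2.le]
      refine setLIntegral_congr_fun measurableSet_Ioo fun t ht => ?_
      rw [ENNReal.ofReal_sub _ (hnn α hα), hR t ht, hR α hα,
        setLIntegral_Ioc_inv_sub lam ⟨hα.1, hα.2.le⟩]
  · rintro ⟨hnn, hmean, hK, hlam1⟩
    have hprob : IsProbabilityMeasure lam :=
      ⟨by rw [← measure_add_measure_compl measurableSet_Ioc, hlam1, hsupp, add_zero]⟩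
    refine ⟨hprob, fun t ht => ?_⟩
    have hcm : AEMeasurable (fun u => ENNReal.ofReal (c u)) (volume.restrict (Ioo t 1)) :=
      (aemeasurable_restrict_of_antitoneOn measurableSet_Ioo hc).ennreal_ofReal.mono_measure
        (Measure.restrict_mono (Ioo_subset_Ioo_left ht.1.le) le_rfl)
    have htail : ∀ s ∈ Ico t 1, lam (Ioc s 1)
        = (∫⁻ u in Ioo s 1, ENNReal.ofReal (c u)) + ENNReal.ofReal s * ENNReal.ofReal (c s) := by
      intro s hs
      have hs' : s ∈ Ioo (0 : ℝ) 1 := ⟨ht.1.trans_le hs.1, hs.2⟩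
      refine (ENNReal.add_right_inj (measure_ne_top lam (Ioc 0 s))).1 ?_
      rw [← measure_union (Ioc_disjoint_Ioc_of_le le_rfl) measurableSet_Ioc,
        Ioc_union_Ioc_eq_Ioc hs'.1.le hs'.2.le, hlam1, hK s hs',
        ← setLIntegral_ofReal_eq_add_of_antitoneOn hc hs' (hnn s hs'), hmean]
    rw [setIntegral_Ioc_inv_eq_toReal lam ht.1.le,
      setLIntegral_Ioc_inv_eq_of_measure_Ioc lam ht hcm htail, ENNReal.toReal_ofReal (hnn t ht)]

section Law

variable {Ω : Type*} [MeasurableSpace Ω] (P : Measure Ω) [IsProbabilityMeasure P] {L : Ω → ℝ}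

theorem lintegral_comp_eq_setLIntegral_quantile (hL : AEMeasurable L P) {g : ℝ → ℝ≥0∞}
    (hg : Measurable g) :
    ∫⁻ ω, g (L ω) ∂P = ∫⁻ t in Ioo 0 1, g (quantile (P.map L) (1 - t)) := by
  have := Measure.isProbabilityMeasure_map hL
  have hc := aemeasurable_restrict_of_antitoneOn (μ := volume) measurableSet_Ioo
    (antitoneOn_quantile_one_sub (P.map L))
  calc ∫⁻ ω, g (L ω) ∂P = ∫⁻ x, g x ∂P.map L := (lintegral_map' hg.aemeasurable hL).symm
    _ = ∫⁻ x, g x ∂(volume.restrict (Ioo 0 1)).map fun t => quantile (P.map L) (1 - t) := by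
        rw [map_quantile_one_sub]
    _ = ∫⁻ t in Ioo 0 1, g (quantile (P.map L) (1 - t)) := lintegral_map' hg.aemeasurable hc

theorem ae_nonneg_iff_quantile_nonneg (hL : AEMeasurable L P) :
    (∀ᵐ ω ∂P, 0 ≤ L ω) ↔ ∀ t ∈ Ioo (0 : ℝ) 1, 0 ≤ quantile (P.map L) (1 - t) := by
  have := Measure.isProbabilityMeasure_map hL
  have hc := aemeasurable_restrict_of_antitoneOn (μ := volume) measurableSet_Ioo
    (antitoneOn_quantile_one_sub (P.map L))
  have hneg : (∀ᵐ ω ∂P, 0 ≤ L ω) ↔ P.map L (Iio 0) = 0 := by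
    rw [Measure.map_apply_of_aemeasurable hL measurableSet_Iio, ae_iff]
    simp only [not_le]
    rfl
  rw [hneg]
  refine ⟨fun h t ht => quantile_nonneg _ h ⟨by linarith [ht.2], by linarith [ht.1]⟩, fun h => ?_⟩
  calc P.map L (Iio 0)
      = ((volume.restrict (Ioo 0 1)).map fun t => quantile (P.map L) (1 - t)) (Iio 0) := by
        rw [map_quantile_one_sub]
    _ = 0 := by
        rw [Measure.map_apply_of_aemeasurable hc measurableSet_Iio,
          Measure.restrict_apply' measurableSet_Ioo]
        exact measure_mono_null (fun t ht => absurd (h t ht.2) (not_le.2 ht.1)) measure_empty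

theorem integral_max_sub_eq_toReal (hL : AEMeasurable L P) (x : ℝ) :
    ∫ ω, max (L ω - x) 0 ∂P
      = (∫⁻ t in Ioo 0 1, ENNReal.ofReal (quantile (P.map L) (1 - t) - x)).toReal := by
  rw [integral_eq_lintegral_of_nonneg_ae (f := fun ω => max (L ω - x) 0)
    (ae_of_all _ fun _ => le_max_right _ _)
    ((hL.sub_const x).max aemeasurable_const).aestronglyMeasurable]
  simp only [ENNReal.ofReal_max, ENNReal.ofReal_zero, max_eq_left zero_le]
  rw [lintegral_comp_eq_setLIntegral_quantile P hL (g := fun y => ENNReal.ofReal (y - x))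
    (by fun_prop)]

theorem integral_eq_toReal_setLIntegral_quantile (hL : AEMeasurable L P)
    (hnn : ∀ᵐ ω ∂P, 0 ≤ L ω) :
    ∫ ω, L ω ∂P = (∫⁻ t in Ioo 0 1, ENNReal.ofReal (quantile (P.map L) (1 - t))).toReal := by
  calc ∫ ω, L ω ∂P = ∫ ω, max (L ω - 0) 0 ∂P :=
        integral_congr_ae (hnn.mono fun ω h => by simp [h])
    _ = _ := by rw [integral_max_sub_eq_toReal P hL]; simp only [sub_zero]

end Law

theorem quantile_representation_iff_general
    {Ω : Type*} [MeasurableSpace Ω] (P : Measure Ω) [IsProbabilityMeasure P]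
    (q : ℝ≥0∞)
    (L : Ω → ℝ) (hL : MemLp L q P)
    (lam : Measure ℝ) (hsupp : lam (Set.Ioc (0 : ℝ) 1)ᶜ = 0) :
    (IsProbabilityMeasure lam ∧
      ∀ t ∈ Set.Ioo (0 : ℝ) 1,
        sInf {s : ℝ | ENNReal.ofReal (1 - t) ≤ P {ω | L ω ≤ s}}
          = ∫ a in Set.Ioc t 1, a⁻¹ ∂lam)
    ↔ ((∀ᵐ ω ∂P, 0 ≤ L ω) ∧ (∫ ω, L ω ∂P) = 1 ∧
        (∀ α ∈ Set.Ioo (0 : ℝ) 1,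
          (lam (Set.Ioc 0 α)).toReal
            = ∫ ω, max (L ω - sInf {s : ℝ | ENNReal.ofReal (1 - α) ≤ P {ω' | L ω' ≤ s}}) 0 ∂P) ∧
        lam (Set.Ioc (0 : ℝ) 1) = 1) := by
  have hLm : AEMeasurable L P := hL.aestronglyMeasurable.aemeasurable
  have hquantile : ∀ p, sInf {s : ℝ | ENNReal.ofReal p ≤ P {ω | L ω ≤ s}}
      = quantile (P.map L) p := fun p => by
    simp_rw [quantile, Measure.map_apply_of_aemeasurable hLm measurableSet_Iic]
    rfl
  have := Measure.isProbabilityMeasure_map hLm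
  simp only [hquantile, integral_max_sub_eq_toReal P hLm]
  rw [eq_setIntegral_Ioc_inv_iff (antitoneOn_quantile_one_sub _) hsupp,
    ae_nonneg_iff_quantile_nonneg P hLm]
  refine and_congr_right fun hnn => ?_
  rw [integral_eq_toReal_setLIntegral_quantile P hLm ((ae_nonneg_iff_quantile_nonneg P hLm).2 hnn),
    ENNReal.toReal_eq_one_iff]
  refine and_congr_right fun hmean => and_congr_left fun hlam1 => forall₂_congr fun α hα =>
    (ENNReal.toReal_eq_toReal_iff' ?_ ?_).symm
  · exact ne_top_of_le_ne_top (hlam1 ▸ ENNReal.one_ne_top)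
      (measure_mono (Ioc_subset_Ioc_right hα.2.le))
  · exact ne_top_of_le_ne_top (hmean ▸ ENNReal.one_ne_top)
      (lintegral_mono fun t => ENNReal.ofReal_le_ofReal (by linarith [hnn α hα]))

/-- Characterization of quantile functions of dual variables: the quantile function of `L`
equals `t ↦ ∫_{(t,1]} α⁻¹ dλ_L(α)` for a probability distribution `λ_L` on `(0,1]` if and
only if `L ≥ 0` a.s., `E[L] = 1`, `λ_L((0,α]) = E[(L − F_L⁻¹(1−α))_+]` for `α ∈ (0,1)`,
and `λ_L((0,1]) = 1`. -/
theorem quantile_representation_iff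
    {Ω : Type*} [MeasurableSpace Ω] (P : Measure Ω) [IsProbabilityMeasure P]
    (q : ℝ≥0∞) (hq : 1 < q)
    (L : Ω → ℝ) (hL : MemLp L q P)
    (lam : Measure ℝ) (hsupp : lam (Set.Ioc (0 : ℝ) 1)ᶜ = 0) :
    (IsProbabilityMeasure lam ∧
      ∀ t ∈ Set.Ioo (0 : ℝ) 1,
        sInf {s : ℝ | ENNReal.ofReal (1 - t) ≤ P {ω | L ω ≤ s}}
          = ∫ a in Set.Ioc t 1, a⁻¹ ∂lam)
    ↔ ((∀ᵐ ω ∂P, 0 ≤ L ω) ∧ (∫ ω, L ω ∂P) = 1 ∧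
        (∀ α ∈ Set.Ioo (0 : ℝ) 1,
          (lam (Set.Ioc 0 α)).toReal
            = ∫ ω, max (L ω - sInf {s : ℝ | ENNReal.ofReal (1 - α) ≤ P {ω' | L ω' ≤ s}}) 0 ∂P) ∧
        lam (Set.Ioc (0 : ℝ) 1) = 1) :=
  quantile_representation_iff_general P q L hL lam hsupp
end

section
/- (Monotonicity gap for the robustness certificate.) Let Ẑ denote an empirical distribution over points Z_1,...,Z_n and ĥ : Z → ℝ a function. For 0 < α_1 < α_2 ≤ 1, let Ŵ_α(ĥ) := inf_η { (1/(αn)) Σ_i (ĥ(Z_i) − η)_+ + η } and let ξ_1 be the empirical (1−α_1)-quantile of ĥ(Z). Then Ŵ_{α_1}(ĥ) − Ŵ_{α_2}(ĥ) ≥ (α_2 − α_1)/(α_1 α_2) · (1/n) Σ_i (ĥ(Z_i) − ξ_1)_+. -/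
/-- Monotonicity gap for the robustness certificate: for `0 < α₁ < α₂ ≤ 1`, the empirical
CVaR values satisfy
`Ŵ_{α₁}(ĥ) − Ŵ_{α₂}(ĥ) ≥ (α₂ − α₁)/(α₁α₂) · (1/n) Σᵢ (ĥ(Zᵢ) − ξ₁)_+`,
where `ξ₁` is the empirical `(1−α₁)`-quantile. -/
theorem empirical_cvar_monotonicity_gap
    {Z : Type*} (n : ℕ) (hn : 0 < n) (Zs : Fin n → Z) (h : Z → ℝ)
    (α₁ α₂ : ℝ) (h₁ : 0 < α₁) (h₁₂ : α₁ < α₂) (h₂ : α₂ ≤ 1)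
    (ξ₁ : ℝ)
    (hξ₁ : ξ₁ = sInf {t : ℝ |
      1 - α₁ ≤ ((Finset.univ.filter (fun i : Fin n => h (Zs i) ≤ t)).card : ℝ) / n}) :
    (⨅ η : ℝ, ((1 / (α₁ * n)) * ∑ i : Fin n, max (h (Zs i) - η) 0 + η))
      - (⨅ η : ℝ, ((1 / (α₂ * n)) * ∑ i : Fin n, max (h (Zs i) - η) 0 + η))
    ≥ (α₂ - α₁) / (α₁ * α₂) * ((1 / (n : ℝ)) * ∑ i : Fin n, max (h (Zs i) - ξ₁) 0) := by
  classical
  have hn' : (0:ℝ) < n := Nat.cast_pos.mpr hn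
  haveI : Nonempty (Fin n) := Fin.pos_iff_nonempty.mp hn
  have hα₂ : 0 < α₂ := lt_trans h₁ h₁₂
  have hα₁1 : α₁ < 1 := lt_of_lt_of_le h₁₂ h₂
  have hα₁n : 0 < α₁ * n := mul_pos h₁ hn'
  have hα₂n : 0 < α₂ * n := mul_pos hα₂ hn'
  set T : Set ℝ := {t : ℝ |
      1 - α₁ ≤ ((Finset.univ.filter (fun i : Fin n => h (Zs i) ≤ t)).card : ℝ) / n} with hTdef
  have hune : (Finset.univ : Finset (Fin n)).Nonempty := Finset.univ_nonempty
  set m : ℝ := Finset.univ.inf' hune (fun i => h (Zs i)) with hmdef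
  set M : ℝ := Finset.univ.sup' hune (fun i => h (Zs i)) with hMdef
  -- T is nonempty
  have hMT : M ∈ T := by
    have hfil : (Finset.univ.filter (fun i : Fin n => h (Zs i) ≤ M)) = Finset.univ := by
      apply Finset.filter_true_of_mem
      intro i _
      exact Finset.le_sup' (fun i => h (Zs i)) (Finset.mem_univ i)
    simp only [hTdef, Set.mem_setOf_eq, hfil, Finset.card_univ, Fintype.card_fin]
    rw [div_self (ne_of_gt hn')]
    linarith
  have hTne : T.Nonempty := ⟨M, hMT⟩
  -- T is bounded below by m
  have hTbdd : BddBelow T := by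
    refine ⟨m, fun t ht => ?_⟩
    simp only [hTdef, Set.mem_setOf_eq] at ht
    have hpos : (0:ℝ) < ((Finset.univ.filter (fun i : Fin n => h (Zs i) ≤ t)).card : ℝ) := by
      have h0 : (0:ℝ) < ((Finset.univ.filter (fun i : Fin n => h (Zs i) ≤ t)).card : ℝ) / n := by
        linarith
      have := mul_pos h0 hn'
      rwa [div_mul_cancel₀ _ (ne_of_gt hn')] at this
    have hcard : 0 < (Finset.univ.filter (fun i : Fin n => h (Zs i) ≤ t)).card := by
      exact_mod_cast hpos
    obtain ⟨i, hi⟩ := Finset.card_pos.mp hcard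
    have hit : h (Zs i) ≤ t := (Finset.mem_filter.mp hi).2
    calc m ≤ h (Zs i) := Finset.inf'_le _ (Finset.mem_univ i)
      _ ≤ t := hit
  -- ξ₁ belongs to T
  have hξT : ξ₁ ∈ T := by
    by_contra hnot
    have hlt : ((Finset.univ.filter (fun i : Fin n => h (Zs i) ≤ ξ₁)).card : ℝ) / n
        < 1 - α₁ := by
      simp only [hTdef, Set.mem_setOf_eq] at hnot
      linarith [lt_of_not_ge hnot]
    set V := Finset.univ.filter (fun i : Fin n => ξ₁ < h (Zs i)) with hVdef
    rcases V.eq_empty_or_nonempty with hV | hV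
    · -- then all values ≤ ξ₁, card = n, contradiction
      have hall : ∀ i : Fin n, h (Zs i) ≤ ξ₁ := by
        intro i
        by_contra hc
        have : i ∈ V := by
          simp only [hVdef, Finset.mem_filter, Finset.mem_univ, true_and]
          exact lt_of_not_ge hc
        simp [hV] at this
      have hfil : (Finset.univ.filter (fun i : Fin n => h (Zs i) ≤ ξ₁)) = Finset.univ :=
        Finset.filter_true_of_mem (fun i _ => hall i)
      rw [hfil] at hlt
      simp only [Finset.card_univ, Fintype.card_fin] at hlt
      rw [div_self (ne_of_gt hn')] at hlt
      linarith
    · set v : ℝ := V.inf' hV (fun i => h (Zs i)) with hvdef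
      have hξv : ξ₁ < v := by
        rw [hvdef, Finset.lt_inf'_iff]
        intro i hi
        exact (Finset.mem_filter.mp hi).2
      have hsInf : sInf T < v := by rw [← hξ₁]; exact hξv
      obtain ⟨t, htT, htv⟩ := exists_lt_of_csInf_lt hTne hsInf
      have hξt : ξ₁ ≤ t := by rw [hξ₁]; exact csInf_le hTbdd htT
      -- every point ≤ t is ≤ ξ₁
      have hsub : (Finset.univ.filter (fun i : Fin n => h (Zs i) ≤ t))
          ⊆ (Finset.univ.filter (fun i : Fin n => h (Zs i) ≤ ξ₁)) := by
        intro i hi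
        have hit : h (Zs i) ≤ t := (Finset.mem_filter.mp hi).2
        simp only [Finset.mem_filter, Finset.mem_univ, true_and]
        by_contra hc
        have hiV : i ∈ V := by
          simp only [hVdef, Finset.mem_filter, Finset.mem_univ, true_and]
          exact lt_of_not_ge hc
        have : v ≤ h (Zs i) := Finset.inf'_le _ hiV
        linarith
      have hcards : ((Finset.univ.filter (fun i : Fin n => h (Zs i) ≤ t)).card : ℝ)
          ≤ ((Finset.univ.filter (fun i : Fin n => h (Zs i) ≤ ξ₁)).card : ℝ) := by
        exact_mod_cast Finset.card_le_card hsub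
      simp only [hTdef, Set.mem_setOf_eq] at htT
      have hdd : ((Finset.univ.filter (fun i : Fin n => h (Zs i) ≤ t)).card : ℝ) / n
          ≤ ((Finset.univ.filter (fun i : Fin n => h (Zs i) ≤ ξ₁)).card : ℝ) / n := by
        gcongr
      linarith [htT, hlt, hdd]
  -- card of strictly-above set is at most α₁ n
  have hcard_gt : ((Finset.univ.filter (fun i : Fin n => ξ₁ < h (Zs i))).card : ℝ) ≤ α₁ * n := by
    have hsplit := Finset.card_filter_add_card_filter_not
      (s := (Finset.univ : Finset (Fin n))) (p := fun i => h (Zs i) ≤ ξ₁)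
    simp only [not_le, Finset.card_univ, Fintype.card_fin] at hsplit
    simp only [hTdef, Set.mem_setOf_eq] at hξT
    have h1 : (1 - α₁) * n ≤ ((Finset.univ.filter (fun i : Fin n => h (Zs i) ≤ ξ₁)).card : ℝ) := by
      rw [le_div_iff₀ hn'] at hξT
      linarith
    have h2 : ((Finset.univ.filter (fun i : Fin n => h (Zs i) ≤ ξ₁)).card : ℝ)
        + ((Finset.univ.filter (fun i : Fin n => ξ₁ < h (Zs i))).card : ℝ) = n := by
      exact_mod_cast congrArg (Nat.cast : ℕ → ℝ) hsplit
    linarith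
  -- card of (≥ ξ₁) set is at least α₁ n
  have hcard_ge : α₁ * n ≤ ((Finset.univ.filter (fun i : Fin n => ξ₁ ≤ h (Zs i))).card : ℝ) := by
    set L := Finset.univ.filter (fun i : Fin n => h (Zs i) < ξ₁) with hLdef
    have hsplit := Finset.card_filter_add_card_filter_not
      (s := (Finset.univ : Finset (Fin n))) (p := fun i => h (Zs i) < ξ₁)
    simp only [not_lt, Finset.card_univ, Fintype.card_fin] at hsplit
    have h2 : ((L.card : ℝ))
        + ((Finset.univ.filter (fun i : Fin n => ξ₁ ≤ h (Zs i))).card : ℝ) = n := by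
      rw [hLdef]
      exact_mod_cast congrArg (Nat.cast : ℕ → ℝ) hsplit
    have hL : (L.card : ℝ) < (1 - α₁) * n := by
      rcases L.eq_empty_or_nonempty with hLe | hLne
      · rw [hLe]
        simp only [Finset.card_empty, Nat.cast_zero]
        nlinarith
      · set u : ℝ := L.sup' hLne (fun i => h (Zs i)) with hudef
        have huξ : u < ξ₁ := by
          rw [hudef, Finset.sup'_lt_iff]
          intro i hi
          exact (Finset.mem_filter.mp hi).2
        set t : ℝ := (u + ξ₁) / 2 with htdef
        have htξ : t < ξ₁ := by rw [htdef]; linarith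
        have hut : u < t := by rw [htdef]; linarith
        have htT : t ∉ T := by
          intro hc
          have : ξ₁ ≤ t := by rw [hξ₁]; exact csInf_le hTbdd hc
          linarith
        have hsubL : L ⊆ Finset.univ.filter (fun i : Fin n => h (Zs i) ≤ t) := by
          intro i hi
          simp only [Finset.mem_filter, Finset.mem_univ, true_and]
          have : h (Zs i) ≤ u := by
            rw [hudef]; exact Finset.le_sup' (fun i => h (Zs i)) hi
          linarith
        have hcardL : (L.card : ℝ)
            ≤ ((Finset.univ.filter (fun i : Fin n => h (Zs i) ≤ t)).card : ℝ) := by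
          exact_mod_cast Finset.card_le_card hsubL
        have hltT : ((Finset.univ.filter (fun i : Fin n => h (Zs i) ≤ t)).card : ℝ) / n
            < 1 - α₁ := by
          simp only [hTdef, Set.mem_setOf_eq] at htT
          linarith [lt_of_not_ge htT]
        rw [div_lt_iff₀ hn'] at hltT
        linarith
    linarith
  -- the two objective functions
  set g₁ : ℝ → ℝ := fun η => (1 / (α₁ * n)) * ∑ i : Fin n, max (h (Zs i) - η) 0 + η with hg₁
  set g₂ : ℝ → ℝ := fun η => (1 / (α₂ * n)) * ∑ i : Fin n, max (h (Zs i) - η) 0 + η with hg₂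
  -- ξ₁ minimizes g₁
  have hmin : ∀ η : ℝ, g₁ ξ₁ ≤ g₁ η := by
    intro η
    rcases le_total ξ₁ η with hle | hle
    · -- η ≥ ξ₁
      have hkey : ∑ i : Fin n, (max (h (Zs i) - ξ₁) 0 - max (h (Zs i) - η) 0)
          ≤ ∑ i : Fin n, (if ξ₁ < h (Zs i) then η - ξ₁ else 0) := by
        apply Finset.sum_le_sum
        intro i _
        rcases le_or_gt (h (Zs i)) ξ₁ with hc | hc
        · rw [if_neg (not_lt.mpr hc), max_eq_right (by linarith)]
          have : (0:ℝ) ≤ max (h (Zs i) - η) 0 := le_max_right _ _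
          linarith
        · rw [if_pos hc, max_eq_left (by linarith)]
          rcases le_or_gt (h (Zs i)) η with hc2 | hc2
          · have : (0:ℝ) ≤ max (h (Zs i) - η) 0 := le_max_right _ _
            linarith
          · rw [max_eq_left (by linarith)]
            linarith
      have hsum2 : ∑ i : Fin n, (if ξ₁ < h (Zs i) then η - ξ₁ else 0)
          = ((Finset.univ.filter (fun i : Fin n => ξ₁ < h (Zs i))).card : ℝ) * (η - ξ₁) := by
        rw [Finset.sum_ite, Finset.sum_const, Finset.sum_const]
        simp [mul_comm]
      rw [Finset.sum_sub_distrib] at hkey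
      rw [hsum2] at hkey
      have hcb : ((Finset.univ.filter (fun i : Fin n => ξ₁ < h (Zs i))).card : ℝ) * (η - ξ₁)
          ≤ α₁ * n * (η - ξ₁) := by
        apply mul_le_mul_of_nonneg_right hcard_gt
        linarith
      simp only [hg₁]
      rw [div_mul_eq_mul_div, div_mul_eq_mul_div, one_mul, one_mul]
      rw [div_add' _ _ _ (ne_of_gt hα₁n), div_add' _ _ _ (ne_of_gt hα₁n),
        div_le_div_iff₀ hα₁n hα₁n]
      nlinarith
    · -- η ≤ ξ₁
      have hkey : ∑ i : Fin n, (if ξ₁ ≤ h (Zs i) then ξ₁ - η else 0)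
          ≤ ∑ i : Fin n, (max (h (Zs i) - η) 0 - max (h (Zs i) - ξ₁) 0) := by
        apply Finset.sum_le_sum
        intro i _
        rcases le_or_gt ξ₁ (h (Zs i)) with hc | hc
        · rw [if_pos hc, max_eq_left (by linarith), max_eq_left (by linarith)]
          linarith
        · rw [if_neg (not_le.mpr hc),
            show max (h (Zs i) - ξ₁) 0 = 0 from max_eq_right (by linarith)]
          have h1 : (0:ℝ) ≤ max (h (Zs i) - η) 0 := le_max_right _ _
          linarith
      have hsum2 : ∑ i : Fin n, (if ξ₁ ≤ h (Zs i) then ξ₁ - η else 0)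
          = ((Finset.univ.filter (fun i : Fin n => ξ₁ ≤ h (Zs i))).card : ℝ) * (ξ₁ - η) := by
        rw [Finset.sum_ite, Finset.sum_const, Finset.sum_const]
        simp [mul_comm]
      rw [Finset.sum_sub_distrib] at hkey
      rw [hsum2] at hkey
      have hcb : α₁ * n * (ξ₁ - η)
          ≤ ((Finset.univ.filter (fun i : Fin n => ξ₁ ≤ h (Zs i))).card : ℝ) * (ξ₁ - η) := by
        apply mul_le_mul_of_nonneg_right hcard_ge
        linarith
      simp only [hg₁]
      rw [div_mul_eq_mul_div, div_mul_eq_mul_div, one_mul, one_mul]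
      rw [div_add' _ _ _ (ne_of_gt hα₁n), div_add' _ _ _ (ne_of_gt hα₁n),
        div_le_div_iff₀ hα₁n hα₁n]
      nlinarith
  -- g₂ is bounded below by m
  have hbdd₂ : ∀ η : ℝ, m ≤ g₂ η := by
    intro η
    have hsumnn : (0:ℝ) ≤ ∑ i : Fin n, max (h (Zs i) - η) 0 :=
      Finset.sum_nonneg (fun i _ => le_max_right _ _)
    rcases le_or_gt m η with hc | hc
    · have : (0:ℝ) ≤ (1 / (α₂ * n)) * ∑ i : Fin n, max (h (Zs i) - η) 0 := by positivity
      simp only [hg₂]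
      linarith
    · have hterm : ∀ i : Fin n, m - η ≤ max (h (Zs i) - η) 0 := by
        intro i
        have : m ≤ h (Zs i) := Finset.inf'_le _ (Finset.mem_univ i)
        calc m - η ≤ h (Zs i) - η := by linarith
          _ ≤ max (h (Zs i) - η) 0 := le_max_left _ _
      have hsumlb : (n : ℝ) * (m - η) ≤ ∑ i : Fin n, max (h (Zs i) - η) 0 := by
        calc (n : ℝ) * (m - η) = ∑ _i : Fin n, (m - η) := by
              rw [Finset.sum_const]; simp [mul_comm]
          _ ≤ ∑ i : Fin n, max (h (Zs i) - η) 0 := Finset.sum_le_sum (fun i _ => hterm i)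
      have hmη : 0 < m - η := by linarith
      have h1 : (m - η) / α₂ ≤ (1 / (α₂ * n)) * ∑ i : Fin n, max (h (Zs i) - η) 0 := by
        have hmul := mul_le_mul_of_nonneg_left hsumlb
          (le_of_lt (by positivity : (0:ℝ) < 1 / (α₂ * n)))
        calc (m - η) / α₂ = (1 / (α₂ * n)) * ((n:ℝ) * (m - η)) := by
              field_simp
          _ ≤ (1 / (α₂ * n)) * ∑ i : Fin n, max (h (Zs i) - η) 0 := hmul
      have h2 : m - η ≤ (m - η) / α₂ := by
        rw [le_div_iff₀ hα₂]
        nlinarith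
      simp only [hg₂]
      linarith
  -- infimum identities
  have hW₁ : (⨅ η : ℝ, g₁ η) = g₁ ξ₁ := by
    apply le_antisymm
    · exact ciInf_le ⟨g₁ ξ₁, by rintro x ⟨η, rfl⟩; exact hmin η⟩ ξ₁
    · exact le_ciInf hmin
  have hW₂ : (⨅ η : ℝ, g₂ η) ≤ g₂ ξ₁ :=
    ciInf_le ⟨m, by rintro x ⟨η, rfl⟩; exact hbdd₂ η⟩ ξ₁
  have hgap : g₁ ξ₁ - g₂ ξ₁
      = (α₂ - α₁) / (α₁ * α₂) * ((1 / (n : ℝ)) * ∑ i : Fin n, max (h (Zs i) - ξ₁) 0) := by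
    simp only [hg₁, hg₂]
    field_simp
    ring
  have : (⨅ η : ℝ, g₁ η) - (⨅ η : ℝ, g₂ η) ≥ g₁ ξ₁ - g₂ ξ₁ := by
    rw [hW₁]
    linarith
  calc (⨅ η : ℝ, ((1 / (α₁ * n)) * ∑ i : Fin n, max (h (Zs i) - η) 0 + η))
      - (⨅ η : ℝ, ((1 / (α₂ * n)) * ∑ i : Fin n, max (h (Zs i) - η) 0 + η))
      = (⨅ η : ℝ, g₁ η) - (⨅ η : ℝ, g₂ η) := rfl
    _ ≥ g₁ ξ₁ - g₂ ξ₁ := this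
    _ = (α₂ - α₁) / (α₁ * α₂) * ((1 / (n : ℝ)) * ∑ i : Fin n, max (h (Zs i) - ξ₁) 0) := hgap
end
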